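/- The image of a constructible subset of ℂ^d under a polynomial map ℂ^d → ℂ^n is a constructible subset of ℂ^n. -/

import Mathlib

/-!
By the Nullstellensatz, `x ↦ 𝔪ₓ` identifies `ℂ^d` with the closed points of
`Spec ℂ[X₁, …, X_d]`, and the constructible subsets of `ℂ^d` are the traces of constructible
subsets of the spectrum. The polynomial map is induced on spectra by `bind₁ P`, so Chevalley's
theorem for spectra makes `comap (bind₁ P) '' T` constructible, and it remains to see that its
closed points are the images of the closed points of `T`. If `𝔪_y = comap (bind₁ P) p` with
`p ∈ T`, the part of `T` lying over `𝔪_y` is a nonempty constructible set; the polynomial ring is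
Jacobson, so it contains a closed point `𝔪ₓ`, and then `P(x) = y`.
-/

open MvPolynomial

/-- The affine variety in `ℂ^d` cut out by a set of polynomials. -/
def zeroSet {d : ℕ} (S : Set (MvPolynomial (Fin d) ℂ)) : Set (Fin d → ℂ) :=
  {x | ∀ f ∈ S, eval x f = 0}

/-- A constructible set: a finite union of Zariski locally closed sets,
i.e. of sets of the form (complement of a variety) ∩ (variety). -/
def IsConstructible' {d : ℕ} (s : Set (Fin d → ℂ)) : Prop :=
  ∃ (m : ℕ) (A B : Fin m → Set (MvPolynomial (Fin d) ℂ)),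
    s = ⋃ i, ((zeroSet (A i))ᶜ ∩ zeroSet (B i))

open Topology PrimeSpectrum

namespace PrimeSpectrum

variable {R S : Type*} [CommRing R] [CommRing S]

theorem nonempty_inter_closedPoints_of_isConstructible [IsJacobsonRing R]
    {T Z : Set (PrimeSpectrum R)} (hT : IsConstructible T) (hZ : IsClosed Z)
    (hTZ : (T ∩ Z).Nonempty) : (T ∩ Z ∩ closedPoints _).Nonempty := by
  obtain ⟨C, rfl⟩ := exists_constructibleSetData_iff.mpr hT
  obtain ⟨p, hpT, hpZ⟩ := hTZ
  obtain ⟨B, hB, hpB⟩ := Set.mem_iUnion₂.mp hpT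
  have hBZ : IsLocallyClosed (B.toSet ∩ Z) :=
    ((isClosed_zeroLocus _).isLocallyClosed.inter
      (isClosed_zeroLocus _).isOpen_compl.isLocallyClosed).inter hZ.isLocallyClosed
  obtain ⟨q, ⟨hqB, hqZ⟩, hq⟩ := nonempty_inter_closedPoints (Z := B.toSet ∩ Z) ⟨p, hpB, hpZ⟩ hBZ
  exact ⟨q, ⟨Set.mem_iUnion₂.mpr ⟨B, hB, hqB⟩, hqZ⟩, hq⟩

theorem exists_mem_closedPoints_comap_eq_of_isConstructible [IsJacobsonRing S] (φ : R →+* S)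
    {T : Set (PrimeSpectrum S)} (hT : IsConstructible T) {p : PrimeSpectrum S} (hp : p ∈ T)
    (hφp : IsClosed {comap φ p}) : ∃ q ∈ T, IsClosed {q} ∧ comap φ q = comap φ p := by
  obtain ⟨q, ⟨hqT, hqp⟩, hq⟩ :=
    nonempty_inter_closedPoints_of_isConstructible hT (hφp.preimage (continuous_comap φ))
      ⟨p, hp, rfl⟩
  exact ⟨q, hqT, hq, hqp⟩

theorem isConstructible_zeroLocus_compl [IsNoetherianRing R] (s : Set R) :
    IsConstructible (zeroLocus s)ᶜ :=
  (TopologicalSpace.NoetherianSpace.isCompact _).isConstructible (isClosed_zeroLocus s).isOpen_compl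

end PrimeSpectrum

namespace MvPolynomial

variable {σ τ K : Type*} [Field K]

theorem pointToPoint_injective :
    Function.Injective (pointToPoint (σ := σ) (k := K) (K := K)) := by
  intro x y hxy
  funext i
  have hx : X i - C (x i) ∈ vanishingIdeal K {x} := by simp
  have hxy : vanishingIdeal K {x} = vanishingIdeal K {y} := congrArg PrimeSpectrum.asIdeal hxy
  have hy := hxy ▸ hx
  simp only [mem_vanishingIdeal_singleton_iff, map_sub, aeval_X, aeval_C, sub_eq_zero] at hy
  exact hy.symm

theorem comap_bind₁_pointToPoint (P : τ → MvPolynomial σ K) (x : σ → K) :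
    PrimeSpectrum.comap (bind₁ P : MvPolynomial τ K →+* MvPolynomial σ K) (pointToPoint x) =
      pointToPoint fun i ↦ eval x (P i) := by
  ext f
  simp [pointToPoint, aeval_bind₁]

theorem range_pointToPoint [IsAlgClosed K] [Finite σ] :
    Set.range (pointToPoint (σ := σ) (k := K) (K := K)) = closedPoints _ := by
  ext p
  rw [mem_closedPoints_iff, isClosed_singleton_iff_isMaximal,
    isMaximal_iff_eq_vanishingIdeal_singleton]
  exact ⟨fun ⟨x, hx⟩ ↦ ⟨x, hx ▸ rfl⟩, fun ⟨x, hx⟩ ↦ ⟨x, PrimeSpectrum.ext hx.symm⟩⟩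

end MvPolynomial

theorem preimage_pointToPoint_zeroLocus {d : ℕ} (S : Set (MvPolynomial (Fin d) ℂ)) :
    pointToPoint (k := ℂ) ⁻¹' zeroLocus S = zeroSet S := by
  ext x
  simp [zeroSet, Set.subset_def, pointToPoint]

theorem IsConstructible'.exists_eq_preimage_pointToPoint {d : ℕ} {s : Set (Fin d → ℂ)}
    (hs : IsConstructible' s) :
    ∃ T : Set (PrimeSpectrum (MvPolynomial (Fin d) ℂ)),
      IsConstructible T ∧ s = pointToPoint (k := ℂ) ⁻¹' T := by
  obtain ⟨m, A, B, rfl⟩ := hs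
  refine ⟨⋃ i, (zeroLocus (A i))ᶜ ∩ zeroLocus (B i), .iUnion fun i ↦
    (isConstructible_zeroLocus_compl _).inter
      (isConstructible_compl.mp (isConstructible_zeroLocus_compl _)), ?_⟩
  simp [preimage_pointToPoint_zeroLocus]

theorem isConstructible'_preimage_pointToPoint {d : ℕ}
    {T : Set (PrimeSpectrum (MvPolynomial (Fin d) ℂ))} (hT : IsConstructible T) :
    IsConstructible' (pointToPoint (k := ℂ) ⁻¹' T) := by
  obtain ⟨C, rfl⟩ := exists_constructibleSetData_iff.mpr hT
  let e := C.equivFin.symm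
  refine ⟨C.card, fun i ↦ {(e i).1.f}, fun i ↦ Set.range (e i).1.g, ?_⟩
  refine .trans ?_
    (e.iSup_comp (g := fun B : C ↦ (zeroSet {B.1.f})ᶜ ∩ zeroSet (Set.range B.1.g))).symm
  simp [ConstructibleSetData.toSet, BasicConstructibleSetData.toSet, Set.iUnion_subtype,
    Set.sdiff_eq, Set.inter_comm, preimage_pointToPoint_zeroLocus]

/-- Chevalley's theorem: the image of a constructible subset of `ℂ^d` under a
polynomial map `ℂ^d → ℂ^n` is constructible. -/
theorem stmt_3 (d n : ℕ) (P : Fin n → MvPolynomial (Fin d) ℂ)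
    (s : Set (Fin d → ℂ)) (hs : IsConstructible' s) :
    IsConstructible' ((fun x (i : Fin n) => eval x (P i)) '' s) := by
  obtain ⟨T, hT, rfl⟩ := hs.exists_eq_preimage_pointToPoint
  let φ : MvPolynomial (Fin n) ℂ →+* MvPolynomial (Fin d) ℂ := bind₁ P
  have hφ : φ.FinitePresentation := RingHom.FinitePresentation.of_finiteType.mp <|
    .of_comp_finiteType (f := algebraMap ℂ _) <| by
      rw [AlgHom.comp_algebraMap]
      exact RingHom.finiteType_algebraMap.mpr inferInstance
  suffices h : (fun x i ↦ eval x (P i)) '' (pointToPoint ⁻¹' T) =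
      pointToPoint (k := ℂ) ⁻¹' (comap φ '' T) from
    h ▸ isConstructible'_preimage_pointToPoint (isConstructible_comap_image hφ hT)
  ext y
  constructor
  · rintro ⟨x, hx, rfl⟩
    exact ⟨_, hx, comap_bind₁_pointToPoint P x⟩
  · rintro ⟨p, hpT, hpy⟩
    obtain ⟨q, hqT, hq, hqp⟩ := exists_mem_closedPoints_comap_eq_of_isConstructible φ hT hpT
      (hpy ▸ range_pointToPoint.subset ⟨y, rfl⟩)
    obtain ⟨x, rfl⟩ := range_pointToPoint.superset hq
    exact ⟨x, hqT, pointToPoint_injective (by rw [← comap_bind₁_pointToPoint, hqp, hpy])⟩
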